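/- arXiv:math/0601633 — 2 statements merged into one kernel-verified Lean document; each statement's English description precedes it below -/
import Mathlib

section
/- Let G be a finite nontrivial abelian group of odd order. Then there exists a subset S ⊆ G with |S| ≤ 2·rk(G) + 1 such that the addition Cayley graph Cay⁺(G,S) is Hamiltonian. -/
/-- A Hamiltonian cycle on a finite type `G` is a permutation of `G` which is a single
cycle whose support is all of `G`. -/
def IsHamCycle {G : Type*} [Fintype G] [DecidableEq G] (σ : Equiv.Perm G) : Prop :=
  σ.IsCycle ∧ σ.support = Finset.univ

/-- The set `D(C)` of differences of consecutive elements along the Hamiltonian cycle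
given by the permutation `σ`. -/
def cycleDiffs {G : Type*} [AddCommGroup G] [Fintype G] [DecidableEq G] [DecidableEq G]
    (σ : Equiv.Perm G) : Finset G :=
  Finset.image (fun g => σ g - g) Finset.univ

/-- The set `S(C)` of sums of consecutive elements along the Hamiltonian cycle
given by the permutation `σ`. -/
def cycleSums {G : Type*} [AddCommGroup G] [Fintype G] [DecidableEq G] [DecidableEq G]
    (σ : Equiv.Perm G) : Finset G :=
  Finset.image (fun g => g + σ g) Finset.univ

/-- The rank of an additive abelian group: the minimal cardinality of a generating set. -/
noncomputable def addRank (G : Type*) [AddCommGroup G] : ℕ :=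
  sInf {n : ℕ | ∃ S : Finset G, S.card = n ∧ AddSubgroup.closure (S : Set G) = ⊤}

/-- The addition Cayley graph `Cay⁺(G,S)`: distinct vertices `g, h` are adjacent
iff `g + h ∈ S`. -/
def addCayley (G : Type*) [AddCommGroup G] (S : Set G) : SimpleGraph G where
  Adj g h := g ≠ h ∧ g + h ∈ S
  symm := by
    constructor
    intro g h hgh
    exact ⟨hgh.1.symm, by rw [add_comm]; exact hgh.2⟩
  loopless := by
    constructor
    intro g hg
    exact hg.1 rfl

/-- The subgroup `2G = {g + g : g ∈ G}` of `G`. -/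
def twoSubgroup (G : Type*) [AddCommGroup G] : AddSubgroup G :=
  (AddMonoidHom.id G + AddMonoidHom.id G).range


namespace Aux11
open SimpleGraph

set_option linter.unusedSectionVars false


lemma second_vertex {V : Type*} {Γ : SimpleGraph V} {u v c : V} (q : Γ.Walk u v)
    (hu : u ∉ q.support.tail) (he : s(u, c) ∈ q.edges) :
    q.support.tail.head? = some c := by
  cases q with
  | nil => simp at he
  | cons h q' =>
    rw [Walk.edges_cons, List.mem_cons] at he
    rw [Walk.support_cons, List.tail_cons] at hu ⊢
    rcases he with he | he
    · rw [Sym2.eq_iff] at he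
      rcases he with ⟨-, rfl⟩ | ⟨rfl, rfl⟩
      · rw [q'.support_eq_cons]; rfl
      · exact absurd q'.start_mem_support hu
    · exact absurd (Walk.fst_mem_support_of_mem_edges q' he) hu

lemma exists_walk {V : Type*} {Γ : SimpleGraph V} :
    ∀ (l : List V) (a b : V), List.Chain Γ.Adj a l →
      (a :: l).getLast (List.cons_ne_nil a l) = b → ∃ w : Γ.Walk a b, w.support = a :: l := by
  intro l
  induction l with
  | nil =>
    intro a b _ hb
    simp only [List.getLast_singleton] at hb
    subst hb
    exact ⟨Walk.nil, rfl⟩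
  | cons c t ih =>
    intro a b hch hb
    replace hch := List.isChain_cons_cons.1 hch
    rw [List.getLast_cons (List.cons_ne_nil c t)] at hb
    obtain ⟨w, hw⟩ := ih c b hch.2 hb
    exact ⟨Walk.cons hch.1 w, by rw [Walk.support_cons, hw]⟩

lemma chain_concat {V : Type*} {R : V → V → Prop} :
    ∀ (l : List V) (x a : V), List.Chain R x l → R ((x :: l).getLast (List.cons_ne_nil x l)) a →
      List.Chain R x (l ++ [a]) := by
  intro l
  induction l with
  | nil =>
    intro x a _ h
    simp only [List.getLast_singleton] at h
    exact List.Chain.cons h List.Chain.nil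
  | cons c t ih =>
    intro x a hch hl
    replace hch := List.isChain_cons_cons.1 hch
    rw [List.getLast_cons (List.cons_ne_nil c t)] at hl
    exact List.Chain.cons hch.1 (ih c a hch.2 hl)

lemma isHamiltonian_of_cycleList {V : Type*} [Fintype V] [DecidableEq V] (Γ : SimpleGraph V)
    (a b : V) (l : List V) (hl : l ≠ [])
    (hnd : (a :: b :: l).Nodup)
    (hcov : ∀ v : V, v ∈ a :: b :: l)
    (hch : (a :: b :: l).Chain' Γ.Adj)
    (hcl : Γ.Adj (l.getLast hl) a) : Γ.IsHamiltonian := by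
  -- basic nodup facts
  have hanb : a ∉ b :: l := by
    intro h; exact (List.nodup_cons.1 hnd).1 h
  have hbl : b ∉ l := (List.nodup_cons.1 (List.nodup_cons.1 hnd).2).1
  have hndbl : (b :: l).Nodup := (List.nodup_cons.1 hnd).2
  have hab : Γ.Adj a b := (List.isChain_cons_cons.1 hch).1
  have hchain : List.Chain Γ.Adj b l := by
    have := (List.isChain_cons_cons.1 hch).2
    exact this
  -- extend chain to b :: (l ++ [a])
  have hlast : (b :: l).getLast (List.cons_ne_nil b l) = l.getLast hl := List.getLast_cons hl
  have hchain2 : List.Chain Γ.Adj b (l ++ [a]) :=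
    chain_concat l b a hchain (by rw [hlast]; exact hcl)
  have hlast2 : (b :: (l ++ [a])).getLast (List.cons_ne_nil _ _) = a := by
    rw [List.getLast_cons (by simp : l ++ [a] ≠ [])]
    exact List.getLast_append _
  obtain ⟨p, hp⟩ := exists_walk (l ++ [a]) b a hchain2 hlast2
  have hpnd : p.support.Nodup := by
    rw [hp]
    rw [show b :: (l ++ [a]) = (b :: l) ++ [a] by simp]
    rw [List.nodup_append]
    exact ⟨hndbl, List.nodup_singleton a, by
      intro x hx y hx' hxy; subst hxy; rw [List.mem_singleton] at hx'; subst hx'; exact hanb hx⟩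
  have hpath : p.IsPath := (Walk.isPath_def p).2 hpnd
  have hedge : s(a, b) ∉ p.edges := by
    intro hmem
    have hmem' : s(a, b) ∈ p.reverse.edges := by
      rw [Walk.edges_reverse, List.mem_reverse]; exact hmem
    have hsup : p.reverse.support = a :: (l.reverse ++ [b]) := by
      rw [Walk.support_reverse, hp]; simp
    have hatail : a ∉ p.reverse.support.tail := by
      rw [hsup, List.tail_cons]
      intro h
      rcases List.mem_append.1 h with h | h
      · exact hanb (List.mem_cons_of_mem _ (List.mem_reverse.1 h))
      · rw [List.mem_singleton] at h; exact (List.nodup_cons.1 hnd).1 (h ▸ List.mem_cons_self)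
    have := second_vertex p.reverse hatail hmem'
    rw [hsup, List.tail_cons] at this
    have hne : l.reverse ≠ [] := by simpa using hl
    rw [List.head?_append_of_ne_nil _ hne] at this
    rw [List.head?_reverse, List.getLast?_eq_getLast hl, Option.some_inj] at this
    exact hbl (this ▸ List.getLast_mem hl)
  have hcyc : (Walk.cons hab p).IsCycle := (Walk.cons_isCycle_iff p hab).2 ⟨hpath, hedge⟩
  have hham : (Walk.cons hab p).IsHamiltonianCycle := by
    rw [Walk.isHamiltonianCycle_iff_isCycle_and_support_count_tail_eq_one]
    refine ⟨hcyc, fun v => ?_⟩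
    rw [Walk.support_cons, List.tail_cons, hp]
    rw [show b :: (l ++ [a]) = (b :: l) ++ [a] by simp, List.count_append]
    by_cases hv : v = a
    · subst hv
      rw [List.count_eq_zero_of_not_mem hanb]
      simp
    · have hvm : v ∈ b :: l := by
        rcases List.mem_cons.1 (hcov v) with h | h
        · exact absurd h hv
        · exact h
      rw [List.count_eq_one_of_mem hndbl hvm]
      simp [hv, List.count_singleton, Ne.symm hv]
  exact fun _ => ⟨a, Walk.cons hab p, hham⟩



open AddSubgroup


variable {G : Type*} [AddCommGroup G] [Fintype G]

lemma exists_pos_nsmul_mem (H : AddSubgroup G) (g : G) : ∃ n, 0 < n ∧ n • g ∈ H :=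
  ⟨Fintype.card G, Fintype.card_pos, by
    rw [card_nsmul_eq_zero]; exact zero_mem H⟩

noncomputable def relOrder (H : AddSubgroup G) (g : G) : ℕ :=
  sInf {n | 0 < n ∧ n • g ∈ H}

lemma relOrder_spec (H : AddSubgroup G) (g : G) :
    0 < relOrder H g ∧ relOrder H g • g ∈ H :=
  Nat.sInf_mem (exists_pos_nsmul_mem H g)

lemma relOrder_pos (H : AddSubgroup G) (g : G) : 0 < relOrder H g := (relOrder_spec H g).1

lemma relOrder_nsmul_mem (H : AddSubgroup G) (g : G) : relOrder H g • g ∈ H :=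
  (relOrder_spec H g).2

lemma relOrder_min (H : AddSubgroup G) (g : G) {j : ℕ} (h1 : 0 < j) (h2 : j < relOrder H g) :
    j • g ∉ H := fun hj => Nat.notMem_of_lt_sInf h2 ⟨h1, hj⟩

lemma relOrder_dvd (H : AddSubgroup G) (g : G) {n : ℕ} (hn : n • g ∈ H) : relOrder H g ∣ n := by
  set m := relOrder H g with hm
  have hr : (n % m) • g ∈ H := by
    have : (n % m) • g = n • g - (m * (n / m)) • g := by
      rw [eq_sub_iff_add_eq, ← add_nsmul]
      rw [Nat.mod_add_div n m]
    rw [this, mul_nsmul]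
    exact sub_mem hn (nsmul_mem (relOrder_nsmul_mem H g) _)
  rcases Nat.eq_zero_or_pos (n % m) with h | h
  · exact Nat.dvd_of_mod_eq_zero h
  · exact absurd hr (relOrder_min H g h (Nat.mod_lt n (relOrder_pos H g)))

lemma relOrder_odd (H : AddSubgroup G) (g : G) (hodd : Odd (Fintype.card G)) :
    Odd (relOrder H g) := by
  have h1 : relOrder H g ∣ addOrderOf g :=
    relOrder_dvd H g (by rw [addOrderOf_nsmul_eq_zero]; exact zero_mem H)
  have h2 : addOrderOf g ∣ Fintype.card G := addOrderOf_dvd_card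
  have := h1.trans h2
  rcases Nat.even_or_odd (relOrder H g) with he | ho
  · exact absurd (even_iff_two_dvd.2 (he.two_dvd.trans this)) (Nat.not_even_iff_odd.2 hodd)
  · exact ho

-- helper: congruence of coset membership
lemma mem_sub_congr (H : AddSubgroup G) {A B x : G} (h : A - B ∈ H) : x - A ∈ H ↔ x - B ∈ H := by
  constructor
  · intro hx
    have := add_mem hx h
    rwa [show x - A + (A - B) = x - B by abel] at this
  · intro hx
    have := sub_mem hx h
    rwa [show x - B - (A - B) = x - A by abel] at this

lemma mem_closure_insert_iff (s : Set G) (g : G) (x : G) :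
    x ∈ closure (insert g s) ↔ ∃ j < relOrder (closure s) g, x - j • g ∈ closure s := by
  set H := closure s with hH
  set m := relOrder H g with hm
  have hmpos : 0 < m := relOrder_pos H g
  have hmg : m • g ∈ H := relOrder_nsmul_mem H g
  constructor
  · intro hx
    let K : AddSubgroup G :=
      { carrier := {x | ∃ j < m, x - j • g ∈ H}
        zero_mem' := ⟨0, hmpos, by simpa using zero_mem H⟩
        add_mem' := by
          rintro x y ⟨j, hj, hxj⟩ ⟨i, hi, hyi⟩
          have hsum : (x + y) - (j + i) • g ∈ H := by
            rw [add_nsmul, show x + y - (j • g + i • g) = (x - j • g) + (y - i • g) by abel]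
            exact add_mem hxj hyi
          rcases lt_or_ge (j + i) m with h | h
          · exact ⟨j + i, h, hsum⟩
          · refine ⟨j + i - m, by omega, ?_⟩
            have he : (j + i - m) • g = (j + i) • g - m • g := by
              rw [eq_sub_iff_add_eq, ← add_nsmul, Nat.sub_add_cancel h]
            rw [show x + y - (j + i - m) • g
                = (x + y - (j+i) • g) + m • g - ((j + i - m) • g - (j+i) • g + m • g) by abel,
              he, show (j + i) • g - m • g - (j + i) • g + m • g = 0 by abel]
            simpa using add_mem hsum hmg
        neg_mem' := by
          rintro x ⟨j, hj, hxj⟩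
          rcases Nat.eq_zero_or_pos j with rfl | hjpos
          · exact ⟨0, hmpos, by simpa using neg_mem hxj⟩
          · refine ⟨m - j, by omega, ?_⟩
            have he : (m - j) • g = m • g - j • g := by
              rw [eq_sub_iff_add_eq, ← add_nsmul, Nat.sub_add_cancel (le_of_lt hj)]
            rw [he, show -x - (m • g - j • g) = -(x - j • g) - m • g by abel]
            exact sub_mem (neg_mem hxj) hmg }
    have hle : closure (insert g s) ≤ K := by
      rw [closure_le]
      rintro y (rfl | hy)
      · rcases eq_or_lt_of_le (Nat.one_le_iff_ne_zero.2 (Nat.pos_iff_ne_zero.1 hmpos)) with h | h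
        · exact ⟨0, hmpos, by rw [← h, one_nsmul] at hmg; simpa using hmg⟩
        · exact ⟨1, h, by simpa using zero_mem H⟩
      · exact ⟨0, hmpos, by simpa using subset_closure hy⟩
    exact hle hx
  · rintro ⟨j, _, hxj⟩
    have h1 : (x - j • g) ∈ closure (insert g s) :=
      closure_mono (Set.subset_insert g s) hxj
    have h2 : j • g ∈ closure (insert g s) :=
      nsmul_mem (subset_closure (Set.mem_insert g s)) j
    simpa using add_mem h1 h2




variable {G : Type*} [AddCommGroup G]

def blocksList (L : List G) (c d : G) : ℕ → List G
  | 0 => []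
  | (t+1) => blocksList L c d t ++ L.map (· + (c + t • d))

variable {H : AddSubgroup G} {L : List G} {c d z : G}

lemma blocks_mem (hL : ∀ x, x ∈ L ↔ x ∈ H) :
    ∀ t x, x ∈ blocksList L c d t ↔ ∃ j < t, x - (c + j • d) ∈ H := by
  intro t
  induction t with
  | zero => simp [blocksList]
  | succ t ih =>
    intro x
    rw [blocksList, List.mem_append, ih]
    constructor
    · rintro (⟨j, hj, hx⟩ | hx)
      · exact ⟨j, Nat.lt_succ_of_lt hj, hx⟩
      · obtain ⟨y, hy, rfl⟩ := List.mem_map.1 hx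
        exact ⟨t, Nat.lt_succ_self t, by simpa using (hL y).1 hy⟩
    · rintro ⟨j, hj, hx⟩
      rcases Nat.lt_succ_iff_lt_or_eq.1 hj with hj | rfl
      · exact Or.inl ⟨j, hj, hx⟩
      · refine Or.inr (List.mem_map.2 ⟨x - (c + j • d), (hL _).2 hx, by abel⟩)

lemma blocks_nodup (hL : ∀ x, x ∈ L ↔ x ∈ H) (hnd : L.Nodup) :
    ∀ t, (∀ i, 0 < i → i < t → i • d ∉ H) → (blocksList L c d t).Nodup := by
  intro t
  induction t with
  | zero => simp [blocksList]
  | succ t ih =>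
    intro hsep
    rw [blocksList]
    rw [List.nodup_append]
    refine ⟨ih (fun i h1 h2 => hsep i h1 (Nat.lt_succ_of_lt h2)), ?_, ?_⟩
    · exact hnd.map (add_left_injective _)
    · intro x hx x' hx' hxx'
      subst hxx'
      rw [blocks_mem hL] at hx
      obtain ⟨j, hj, hxj⟩ := hx
      obtain ⟨y, hy, rfl⟩ := List.mem_map.1 hx'
      have hxt : (y + (c + t • d)) - (c + t • d) ∈ H := by simpa using (hL y).1 hy
      have hdiff : (t - j) • d ∈ H := by
        have he : (t - j) • d = (t • d) - (j • d) := by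
          rw [eq_sub_iff_add_eq, ← add_nsmul, Nat.sub_add_cancel (le_of_lt hj)]
        rw [he, show t • d - j • d =
          ((y + (c + t • d)) - (c + j • d)) - ((y + (c + t • d)) - (c + t • d)) by abel]
        exact sub_mem hxj hxt
      exact hsep (t - j) (by omega) (by omega) hdiff

lemma blocks_getLast? (hlast : L.getLast? = some z) :
    ∀ t, (blocksList L c d (t+1)).getLast? = some (z + (c + t • d)) := by
  intro t
  have hLne : L ≠ [] := by intro h; rw [h] at hlast; simp at hlast
  rw [blocksList, List.getLast?_append_of_ne_nil _ (by simpa using hLne : L.map (· + (c + t • d)) ≠ [])]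
  rw [List.getLast?_map, hlast]
  rfl

lemma blocks_head? (hhead : L.head? = some 0) :
    ∀ t, 0 < t → (blocksList L c d t).head? = some c := by
  intro t
  induction t with
  | zero => omega
  | succ t ih =>
    intro _
    rw [blocksList]
    rcases Nat.eq_zero_or_pos t with rfl | ht
    · rw [blocksList]
      simp only [List.nil_append, List.head?_map, hhead]
      simp
    · have hne : blocksList L c d t ≠ [] := by
        intro h
        have := ih ht
        rw [h] at this; simp at this
      rw [List.head?_append_of_ne_nil _ hne]
      exact ih ht

lemma blocks_chain' {SL : List G} (hch : List.Chain' (fun a b => b - a ∈ SL) L)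
    (hhead : L.head? = some 0) (hlast : L.getLast? = some z) :
    ∀ t, List.Chain' (fun a b => b - a ∈ (d - z) :: SL) (blocksList L c d t) := by
  intro t
  induction t with
  | zero => simp [blocksList, List.Chain']
  | succ t ih =>
    rw [blocksList]
    apply List.IsChain.append ih
    · -- chain within the mapped block
      rw [List.isChain_map]
      exact hch.imp (fun a b h => by
        simpa using List.mem_cons_of_mem _ h)
    · -- link
      intro x hx y hy
      rcases Nat.eq_zero_or_pos t with rfl | ht
      · rw [blocksList] at hx; simp at hx
      · obtain ⟨t', rfl⟩ := Nat.exists_eq_succ_of_ne_zero (Nat.pos_iff_ne_zero.1 ht)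
        rw [blocks_getLast? hlast t'] at hx
        rw [List.head?_map, hhead] at hy
        simp only [Option.mem_def, Option.some_inj, Option.map_some, zero_add] at hx hy
        subst hx
        subst hy
        have he : c + t'.succ • d - (z + (c + t' • d)) = d - z := by
          rw [succ_nsmul]; abel
        rw [he]
        exact List.mem_cons_self


open AddSubgroup in
lemma fullPath {G : Type*} [AddCommGroup G] [Fintype G] :
    ∀ gs : List G, ∃ L : List G, ∃ z : G,
      L.head? = some 0 ∧ L.getLast? = some z ∧ L.Nodup ∧
      (∀ x, x ∈ L ↔ x ∈ closure {a | a ∈ gs}) ∧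
      List.Chain' (fun a b => b - a ∈ gs) L := by
  intro gs
  induction gs with
  | nil =>
    refine ⟨[0], 0, rfl, rfl, List.nodup_singleton 0, ?_, List.isChain_singleton 0⟩
    intro x
    simp only [List.mem_singleton]
    rw [show {a : G | a ∈ ([] : List G)} = (∅ : Set G) by simp, AddSubgroup.closure_empty,
      AddSubgroup.mem_bot]
  | cons g t ih =>
    obtain ⟨L, z, hhead, hlast, hnd, hmem, hch⟩ := ih
    set H := closure {a : G | a ∈ t} with hH
    set m := relOrder H g with hm
    have hmpos : 0 < m := relOrder_pos H g
    have hz : z ∈ H := (hmem z).1 (List.mem_of_getLast? hlast)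
    -- separation
    have hsep : ∀ i : ℕ, 0 < i → i < m → i • (z + g) ∉ H := by
      intro i h1 h2 hi
      rw [smul_add] at hi
      have : i • g ∈ H := by
        have := sub_mem hi (nsmul_mem hz i)
        simpa using this
      exact relOrder_min H g h1 h2 this
    refine ⟨blocksList L 0 (z + g) m, z + (0 + (m-1) • (z+g)), ?_, ?_, ?_, ?_, ?_⟩
    · exact blocks_head? hhead m hmpos
    · obtain ⟨m', hm'⟩ := Nat.exists_eq_succ_of_ne_zero (Nat.pos_iff_ne_zero.1 hmpos)
      rw [hm']
      simpa [hm'] using blocks_getLast? (c := (0:G)) (d := z + g) hlast m'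
    · exact blocks_nodup hmem hnd m hsep
    · intro x
      rw [blocks_mem hmem m x]
      rw [show {a : G | a ∈ g :: t} = insert g {a : G | a ∈ t} by ext y; simp]
      rw [mem_closure_insert_iff]
      have hAB : ∀ j : ℕ, (0 + j • (z+g)) - j • g ∈ H := by
        intro j
        rw [show (0 + j • (z+g)) - j • g = j • z by rw [smul_add]; abel]
        exact nsmul_mem hz j
      constructor
      · rintro ⟨j, hj, hx⟩
        exact ⟨j, hj, ((mem_sub_congr H (hAB j)).1 hx)⟩
      · rintro ⟨j, hj, hx⟩
        exact ⟨j, hj, ((mem_sub_congr H (hAB j)).2 hx)⟩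
    · have := blocks_chain' (c := 0) (d := z + g) hch hhead hlast m
      simp only [show z + g - z = g by abel] at this
      exact this

def stepList {G : Type*} [Neg G] : List G → List G
  | [] => []
  | (g :: t) => g :: (t ++ t.map (fun x => -x))

lemma stepList_subset {G : Type*} [Neg G] (g : G) (t : List G) :
    ∀ x ∈ stepList t, x ∈ stepList (g :: t) := by
  cases t with
  | nil => simp [stepList]
  | cons t0 t' =>
    intro x hx
    simp only [stepList, List.mem_cons, List.mem_append, List.mem_map] at hx ⊢
    rcases hx with rfl | hx | ⟨y, hy, rfl⟩
    · tauto
    · tauto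
    · exact Or.inr (Or.inr ⟨y, Or.inr hy, rfl⟩)

lemma mem_stepList_cons {G : Type*} [Neg G] {g x : G} {t : List G} (hx : x ∈ g :: t) :
    x ∈ stepList (g :: t) := by
  simp only [stepList, List.mem_cons, List.mem_append] at hx ⊢
  tauto

open AddSubgroup in
lemma classPath {G : Type*} [AddCommGroup G] [Fintype G] (hodd : Odd (Fintype.card G)) :
    ∀ gs : List G, ∃ P : List G,
      P.head? = some 0 ∧ P.Nodup ∧
      (∀ x ∈ P, x ∈ closure {a | a ∈ gs}) ∧
      (∀ x, x ∈ closure {a | a ∈ gs} → x ∈ P ∨ -x ∈ P) ∧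
      (∀ x ∈ P, -x ∈ P → x = 0) ∧
      List.Chain' (fun a b => b - a ∈ stepList gs) P := by
  intro gs
  induction gs with
  | nil =>
    refine ⟨[0], rfl, List.nodup_singleton 0, ?_, ?_, ?_, List.isChain_singleton 0⟩
    · intro x hx
      rw [List.mem_singleton] at hx
      subst hx
      exact zero_mem _
    · intro x hx
      rw [show {a : G | a ∈ ([] : List G)} = (∅ : Set G) by simp, AddSubgroup.closure_empty,
        AddSubgroup.mem_bot] at hx
      subst hx
      exact Or.inl (List.mem_singleton_self 0)
    · intro x hx _
      exact List.mem_singleton.1 hx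
  | cons g t ih =>
    obtain ⟨P, hPhead, hPnd, hPsub, hPcov, hPanti, hPch⟩ := ih
    obtain ⟨L, z, hLhead, hLlast, hLnd, hLmem, hLch⟩ := fullPath t
    set H := closure {a : G | a ∈ t} with hH
    have hsetins : {a : G | a ∈ g :: t} = insert g {a : G | a ∈ t} := by ext y; simp
    have hHle : H ≤ closure {a : G | a ∈ g :: t} := by
      rw [hsetins]
      exact closure_mono (Set.subset_insert g _)
    have hgmem : g ∈ closure {a : G | a ∈ g :: t} := subset_closure (by simp)
    set m := relOrder H g with hm
    have hmpos : 0 < m := relOrder_pos H g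
    have hmg : m • g ∈ H := relOrder_nsmul_mem H g
    obtain ⟨k, hk⟩ := relOrder_odd H g hodd
    have hPne : P ≠ [] := by intro h; rw [h] at hPhead; simp at hPhead
    set w := P.getLast hPne with hwdef
    have hw : w ∈ H := hPsub w (List.getLast_mem hPne)
    have hz : z ∈ H := (hLmem z).1 (List.mem_of_getLast? hLlast)
    set cb := blocksList L (w + g) (z + g) k with hcb_def
    have hAB : ∀ j : ℕ, (w + g + j • (z + g)) - (j + 1) • g ∈ H := by
      intro j
      rw [show (w + g + j • (z + g)) - (j + 1) • g = w + j • z by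
        rw [smul_add, succ_nsmul]; abel]
      exact add_mem hw (nsmul_mem hz j)
    have hcbmem : ∀ x, x ∈ cb ↔ ∃ j, 0 < j ∧ j ≤ k ∧ x - j • g ∈ H := by
      intro x
      rw [hcb_def, blocks_mem hLmem k x]
      constructor
      · rintro ⟨j, hj, hx⟩
        exact ⟨j + 1, Nat.succ_pos j, by omega, (mem_sub_congr H (hAB j)).1 hx⟩
      · rintro ⟨j, hj0, hjk, hx⟩
        obtain ⟨j', rfl⟩ : ∃ j', j = j' + 1 := ⟨j - 1, by omega⟩
        exact ⟨j', by omega, (mem_sub_congr H (hAB j')).2 hx⟩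
    have hsep : ∀ i : ℕ, 0 < i → i < k → i • (z + g) ∉ H := by
      intro i h1 h2 hi
      rw [smul_add] at hi
      have : i • g ∈ H := by
        have := sub_mem hi (nsmul_mem hz i)
        simpa using this
      exact relOrder_min H g h1 (by omega) this
    have hrel : relOrder (closure {a : G | a ∈ t}) g = 2 * k + 1 := hk
    refine ⟨P ++ cb, ?_, ?_, ?_, ?_, ?_, ?_⟩
    · rw [List.head?_append_of_ne_nil P hPne]
      exact hPhead
    · -- Nodup
      rw [List.nodup_append]
      refine ⟨hPnd, blocks_nodup hLmem hLnd k hsep, ?_⟩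
      intro x hx x' hx' hxx'
      subst hxx'
      obtain ⟨j, hj0, hjk, hxj⟩ := (hcbmem x).1 hx'
      have hxH : x ∈ H := hPsub x hx
      have : j • g ∈ H := by
        have := sub_mem hxH hxj
        simpa using this
      exact relOrder_min H g hj0 (by omega) this
    · -- subset of closure
      intro x hx
      rcases List.mem_append.1 hx with hx | hx
      · exact hHle (hPsub x hx)
      · obtain ⟨j, _, _, hxj⟩ := (hcbmem x).1 hx
        have := add_mem (hHle hxj) (nsmul_mem hgmem j)
        simpa using this
    · -- coverage
      intro x hx
      rw [hsetins, mem_closure_insert_iff] at hx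
      obtain ⟨j, hjm, hxj⟩ := hx
      rcases Nat.eq_zero_or_pos j with rfl | hj0
      · simp only [zero_nsmul, sub_zero] at hxj
        rcases hPcov x hxj with h | h
        · exact Or.inl (List.mem_append_left _ h)
        · exact Or.inr (List.mem_append_left _ h)
      · rcases le_or_gt j k with hjk | hjk
        · exact Or.inl (List.mem_append_right _ ((hcbmem x).2 ⟨j, hj0, hjk, hxj⟩))
        · refine Or.inr (List.mem_append_right _ ((hcbmem (-x)).2 ⟨m - j, by omega, by omega, ?_⟩))
          have h1 : (m - j) • g = m • g - j • g := by
            rw [eq_sub_iff_add_eq, ← add_nsmul, Nat.sub_add_cancel (le_of_lt hjm)]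
          have h2 : -x - (m - j) • g = -(x - j • g) - m • g := by rw [h1]; abel
          rw [h2]
          exact sub_mem (neg_mem hxj) hmg
    · -- antisymmetry
      intro x hx hnx
      rcases List.mem_append.1 hx with hx | hx <;> rcases List.mem_append.1 hnx with hnx | hnx
      · exact hPanti x hx hnx
      · exfalso
        obtain ⟨j, hj0, hjk, hxj⟩ := (hcbmem (-x)).1 hnx
        have : j • g ∈ H := by
          have := sub_mem (neg_mem (hPsub x hx)) hxj
          simpa using this
        exact relOrder_min H g hj0 (by omega) this
      · exfalso
        obtain ⟨j, hj0, hjk, hxj⟩ := (hcbmem x).1 hx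
        have : j • g ∈ H := by
          have := sub_mem (neg_mem (hPsub (-x) hnx)) (by simpa using hxj)
          simpa using this
        exact relOrder_min H g hj0 (by omega) this
      · exfalso
        obtain ⟨j, hj0, hjk, hxj⟩ := (hcbmem x).1 hx
        obtain ⟨i, hi0, hik, hyi⟩ := (hcbmem (-x)).1 hnx
        have : (j + i) • g ∈ H := by
          have h := add_mem hxj hyi
          rw [show (x - j • g) + (-x - i • g) = -((j + i) • g) by rw [add_nsmul]; abel] at h
          simpa using neg_mem h
        exact relOrder_min H g (by omega) (by omega) this
    · -- chain
      apply List.IsChain.append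
      · exact hPch.imp (fun a b hab => stepList_subset g t _ hab)
      · have := blocks_chain' (c := w + g) (d := z + g) hLch hLhead hLlast k
        simp only [show z + g - z = g by abel] at this
        exact this.imp (fun a b hab => mem_stepList_cons hab)
      · intro x hx y hy
        rcases Nat.eq_zero_or_pos k with rfl | hkpos
        · rw [hcb_def] at hy; simp [blocksList] at hy
        · rw [List.getLast?_eq_getLast hPne] at hx
          rw [hcb_def, blocks_head? hLhead k hkpos] at hy
          simp only [Option.mem_def, Option.some_inj] at hx hy
          subst hx
          subst hy
          exact mem_stepList_cons (by simp [← hwdef, show w + g - w = g by abel])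


def pairList {G : Type*} [Neg G] (ys : List G) : List G := ys.flatMap (fun y => [y, -y])

lemma mem_pairList {G : Type*} [Neg G] {ys : List G} {x : G} :
    x ∈ pairList ys ↔ ∃ y ∈ ys, x = y ∨ x = -y := by
  simp only [pairList, List.mem_flatMap, List.mem_cons, List.mem_singleton, List.not_mem_nil,
    or_false]

lemma getLast?_cons_of_ne_nil {G : Type*} (a : G) {l : List G} (hl : l ≠ []) :
    (a :: l).getLast? = l.getLast? := by
  rw [show a :: l = [a] ++ l by simp, List.getLast?_append_of_ne_nil _ hl]

lemma pairList_cons {G : Type*} [Neg G] (y : G) (t : List G) :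
    pairList (y :: t) = y :: -y :: pairList t := by
  simp [pairList]

lemma pairList_getLast? {G : Type*} [Neg G] :
    ∀ (ys : List G) (h : ys ≠ []), (pairList ys).getLast? = some (-(ys.getLast h)) := by
  intro ys
  induction ys with
  | nil => intro h; exact absurd rfl h
  | cons y t ih =>
    intro h
    cases t with
    | nil => simp [pairList]
    | cons y' t' =>
      have hne : (y' :: t') ≠ [] := List.cons_ne_nil _ _
      have hplne : pairList (y' :: t') ≠ [] := by
        intro hx
        have := ih hne
        rw [hx] at this
        simp at this
      rw [pairList_cons, List.getLast?_cons_cons, getLast?_cons_of_ne_nil _ hplne, ih hne,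
        List.getLast_cons hne]

lemma pairList_nodup {G : Type*} [SubtractionMonoid G] :
    ∀ (ys : List G), ys.Nodup → (∀ x ∈ ys, ∀ y ∈ ys, x ≠ -y) → (pairList ys).Nodup := by
  intro ys
  induction ys with
  | nil => intro _ _; simp [pairList]
  | cons y t ih =>
    intro hnd hanti
    rw [pairList_cons]
    have hynt : y ∉ t := (List.nodup_cons.1 hnd).1
    have htnd : t.Nodup := (List.nodup_cons.1 hnd).2
    have hmem : ∀ x ∈ t, x ∈ y :: t := fun x hx => List.mem_cons_of_mem y hx
    refine List.nodup_cons.2 ⟨?_, List.nodup_cons.2 ⟨?_, ih htnd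
      (fun a ha b hb => hanti a (hmem a ha) b (hmem b hb))⟩⟩
    · intro hy
      rcases List.mem_cons.1 hy with hy | hy
      · exact hanti y (List.mem_cons_self) y (List.mem_cons_self) hy
      · rw [mem_pairList] at hy
        obtain ⟨u, hu, h | h⟩ := hy
        · exact hynt (h ▸ hu)
        · exact hanti y (List.mem_cons_self) u (hmem u hu) h
    · intro hy
      rw [mem_pairList] at hy
      obtain ⟨u, hu, h | h⟩ := hy
      · exact hanti y (List.mem_cons_self) u (hmem u hu) (by rw [← h, neg_neg])
      · rw [neg_inj] at h
        exact hynt (h ▸ hu)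

lemma pairList_chain {G : Type*} [AddCommGroup G] {S' : List G} {Sset : Set G}
    (hsub : ∀ x ∈ S', x ∈ Sset) (h0 : (0 : G) ∈ Sset) :
    ∀ (ys : List G) (prev : G), List.Chain (fun a b => b - a ∈ S') prev ys →
      List.Chain (fun a b => a + b ∈ Sset) (-prev) (pairList ys) := by
  intro ys
  induction ys with
  | nil => intro prev _; simp only [pairList, List.flatMap_nil]; exact List.Chain.nil
  | cons y t ih =>
    intro prev hch
    replace hch := List.isChain_cons_cons.1 hch
    rw [pairList_cons]
    refine List.Chain.cons ?_ (List.Chain.cons ?_ (ih y hch.2))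
    · have : -prev + y = y - prev := by abel
      rw [this]
      exact hsub _ hch.1
    · rw [add_neg_cancel]
      exact h0

lemma chain'_and {α : Type*} {R Q : α → α → Prop} :
    ∀ {l : List α}, l.Chain' R → l.Chain' Q → l.Chain' (fun a b => R a b ∧ Q a b) := by
  intro l
  induction l with
  | nil => intro _ _; exact List.IsChain.nil
  | cons a t ih =>
    intro hR hQ
    cases t with
    | nil => exact List.isChain_singleton a
    | cons b t' =>
      simp only [List.Chain', List.isChain_cons_cons] at hR hQ ⊢
      exact ⟨⟨hR.1, hQ.1⟩, ih hR.2 hQ.2⟩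

end Aux11

theorem stmt11 (G : Type*) [AddCommGroup G] [Fintype G] [DecidableEq G] [Nontrivial G]
    (hodd : Odd (Fintype.card G)) :
    ∃ S : Finset G, S.card ≤ 2 * addRank G + 1 ∧ (addCayley G ↑S).IsHamiltonian := by
  classical
  have hrk : addRank G = sInf {n : ℕ | ∃ S : Finset G, S.card = n ∧
      AddSubgroup.closure (S : Set G) = ⊤} := rfl
  have hne : {n : ℕ | ∃ S : Finset G, S.card = n ∧
      AddSubgroup.closure (S : Set G) = ⊤}.Nonempty :=
    ⟨Finset.univ.card, Finset.univ, rfl, by rw [Finset.coe_univ]; exact AddSubgroup.closure_univ⟩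
  obtain ⟨Sg, hScard, hSgen⟩ := Nat.sInf_mem hne
  obtain ⟨gs, hgsdef⟩ : ∃ gs : List G, gs = Sg.toList := ⟨_, rfl⟩
  have hgslen : gs.length = addRank G := by
    rw [hgsdef, Finset.length_toList, hScard, hrk]
  have hgen : AddSubgroup.closure {a : G | a ∈ gs} = ⊤ := by
    rw [show {a : G | a ∈ gs} = (Sg : Set G) by ext y; simp [hgsdef]]
    exact hSgen
  obtain ⟨P, hPhead, hPnd, hPsub, hPcov, hPanti, hPch⟩ := Aux11.classPath hodd gs
  obtain ⟨p0, ys, rfl⟩ : ∃ p0 ys, P = p0 :: ys := by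
    cases P with
    | nil => simp at hPhead
    | cons p0 ys => exact ⟨p0, ys, rfl⟩
  have hp0 : p0 = 0 := by simpa using hPhead
  subst hp0
  have hcovP : ∀ x : G, x ∈ (0 :: ys) ∨ -x ∈ (0 :: ys) := by
    intro x
    exact hPcov x (by rw [hgen]; trivial)
  obtain ⟨g, t, rfl⟩ : ∃ g t, gs = g :: t := by
    cases hgs : gs with
    | nil =>
      exfalso
      rw [hgs] at hgen
      rw [show {a : G | a ∈ ([] : List G)} = (∅ : Set G) by simp,
        AddSubgroup.closure_empty] at hgen
      obtain ⟨x, hx⟩ := exists_ne (0 : G)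
      have hxb : x ∈ (⊥ : AddSubgroup G) := by rw [hgen]; trivial
      exact hx (AddSubgroup.mem_bot.1 hxb)
    | cons g t => exact ⟨g, t, rfl⟩
  have h0ys : (0 : G) ∉ ys := (List.nodup_cons.1 hPnd).1
  have hysnd : ys.Nodup := (List.nodup_cons.1 hPnd).2
  have hysne : ys ≠ [] := by
    intro h
    subst h
    obtain ⟨x, hx⟩ := exists_ne (0 : G)
    rcases hcovP x with hm | hm
    · exact hx (List.mem_singleton.1 hm)
    · exact hx (by rw [← neg_eq_zero]; exact List.mem_singleton.1 hm)
  set yK := ys.getLast hysne with hyKdef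
  have hyKmem : yK ∈ ys := List.getLast_mem hysne
  have hyKne : yK ≠ 0 := fun h => h0ys (h ▸ hyKmem)
  -- the sum set
  set SF : Finset G := insert 0 (insert (-yK) (insert g
    (t.toFinset ∪ (t.map (fun x => -x)).toFinset))) with hSFdef
  have hcard : SF.card ≤ 2 * addRank G + 1 := by
    have h1 : SF.card ≤ (t.toFinset ∪ (t.map (fun x => -x)).toFinset).card + 3 := by
      calc SF.card ≤ (insert (-yK) (insert g
            (t.toFinset ∪ (t.map (fun x => -x)).toFinset))).card + 1 := Finset.card_insert_le _ _
        _ ≤ (insert g (t.toFinset ∪ (t.map (fun x => -x)).toFinset)).card + 2 := by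
            have := Finset.card_insert_le (-yK) (insert g
              (t.toFinset ∪ (t.map (fun x => -x)).toFinset))
            omega
        _ ≤ (t.toFinset ∪ (t.map (fun x => -x)).toFinset).card + 3 := by
            have := Finset.card_insert_le g (t.toFinset ∪ (t.map (fun x => -x)).toFinset)
            omega
    have h2 : (t.toFinset ∪ (t.map (fun x => -x)).toFinset).card ≤ 2 * t.length := by
      calc (t.toFinset ∪ (t.map (fun x => -x)).toFinset).card
          ≤ t.toFinset.card + (t.map (fun x => -x)).toFinset.card := Finset.card_union_le _ _
        _ ≤ t.length + (t.map (fun x => -x)).length := by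
            have := t.toFinset_card_le
            have := (t.map (fun x => -x)).toFinset_card_le
            omega
        _ = 2 * t.length := by rw [List.length_map]; omega
    have h3 : t.length + 1 = addRank G := by
      rw [← hgslen]; simp
    omega
  refine ⟨SF, hcard, ?_⟩
  -- membership facts
  have h0S : (0 : G) ∈ (SF : Set G) := by
    rw [hSFdef]; simp
  have hyKS : -yK ∈ (SF : Set G) := by
    rw [hSFdef]; simp
  have hstep : ∀ x ∈ Aux11.stepList (g :: t), x ∈ (SF : Set G) := by
    intro x hx
    simp only [Aux11.stepList, List.mem_cons, List.mem_append] at hx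
    rw [hSFdef]
    simp only [Finset.coe_insert, Set.mem_insert_iff, Finset.coe_union, Set.mem_union,
      Finset.mem_coe, List.mem_toFinset]
    rcases hx with rfl | hx | hx
    · tauto
    · tauto
    · tauto
  -- chain of sums
  have hchain0 : List.Chain (fun a b => b - a ∈ Aux11.stepList (g :: t)) 0 ys := hPch
  have hsum : List.Chain' (fun a b => a + b ∈ (SF : Set G)) (0 :: Aux11.pairList ys) := by
    have := Aux11.pairList_chain hstep h0S ys 0 hchain0
    rw [neg_zero] at this
    exact this
  -- nodup of the cycle list
  have hanti2 : ∀ x ∈ ys, ∀ y ∈ ys, x ≠ -y := by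
    intro x hx y hy hxy
    have h1 : x ∈ 0 :: ys := List.mem_cons_of_mem _ hx
    have h2 : -x ∈ 0 :: ys := by
      rw [hxy, neg_neg]
      exact List.mem_cons_of_mem _ hy
    exact h0ys ((hPanti x h1 h2) ▸ hx)
  have hplnd : (Aux11.pairList ys).Nodup := Aux11.pairList_nodup ys hysnd hanti2
  have h0pl : (0 : G) ∉ Aux11.pairList ys := by
    intro h
    rw [Aux11.mem_pairList] at h
    obtain ⟨y, hy, h | h⟩ := h
    · exact h0ys (h ▸ hy)
    · rw [eq_comm, neg_eq_zero] at h
      exact h0ys (h ▸ hy)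
  have hCnd : ((0 : G) :: Aux11.pairList ys).Nodup := List.nodup_cons.2 ⟨h0pl, hplnd⟩
  -- coverage
  have hCcov : ∀ v : G, v ∈ (0 : G) :: Aux11.pairList ys := by
    intro v
    rcases hcovP v with hm | hm
    · rcases List.mem_cons.1 hm with rfl | hm
      · exact List.mem_cons_self
      · exact List.mem_cons_of_mem _ (Aux11.mem_pairList.2 ⟨v, hm, Or.inl rfl⟩)
    · rcases List.mem_cons.1 hm with hv | hm
      · rw [neg_eq_zero] at hv
        exact hv ▸ List.mem_cons_self
      · exact List.mem_cons_of_mem _ (Aux11.mem_pairList.2 ⟨-v, hm, Or.inr (neg_neg v).symm⟩)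
  -- adjacency chain
  have hneC : ((0 : G) :: Aux11.pairList ys).Chain' (fun a b => a ≠ b) :=
    List.Pairwise.isChain hCnd
  have hchAdj : ((0 : G) :: Aux11.pairList ys).Chain' (addCayley G (SF : Set G)).Adj := by
    have := Aux11.chain'_and hneC hsum
    exact this.imp (fun a b hab => ⟨hab.1, hab.2⟩)
  -- destructure ys
  obtain ⟨y1, t', rfl⟩ : ∃ y1 t', ys = y1 :: t' := by
    cases ys with
    | nil => exact absurd rfl hysne
    | cons y1 t' => exact ⟨y1, t', rfl⟩
  have hpl : Aux11.pairList (y1 :: t') = y1 :: -y1 :: Aux11.pairList t' :=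
    Aux11.pairList_cons y1 t'
  rw [hpl] at hchAdj hCnd hCcov
  -- closing edge
  have hlne : (-y1 :: Aux11.pairList t') ≠ [] := List.cons_ne_nil _ _
  have hlastv : (-y1 :: Aux11.pairList t').getLast hlne = -yK := by
    have h1 : (Aux11.pairList (y1 :: t')).getLast? = some (-yK) :=
      Aux11.pairList_getLast? (y1 :: t') hysne
    rw [hpl] at h1
    have h2 : (y1 :: -y1 :: Aux11.pairList t').getLast (List.cons_ne_nil _ _)
        = (-y1 :: Aux11.pairList t').getLast hlne := List.getLast_cons hlne
    rw [List.getLast?_eq_getLast (List.cons_ne_nil _ _), h2, Option.some_inj] at h1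
    exact h1
  have hclose : (addCayley G (SF : Set G)).Adj ((-y1 :: Aux11.pairList t').getLast hlne) 0 := by
    rw [hlastv]
    refine ⟨by simpa using hyKne, ?_⟩
    rw [add_zero]
    exact hyKS
  exact Aux11.isHamiltonian_of_cycleList (addCayley G (SF : Set G)) 0 y1
    (-y1 :: Aux11.pairList t') hlne hCnd hCcov hchAdj hclose
end

section
/- Let G be a finite abelian group with |G| ≥ 3 and S ⊆ G. (i) If |S| = 1, then the addition Cayley graph Cay⁺(G,S) is not Hamiltonian. (ii) If S = {s₁, s₂} with s₁ ≠ s₂, then Cay⁺(G,S) is Hamiltonian if and only if the cyclic subgroup H = ⟨s₂ − s₁⟩ generated by s₂ − s₁ has index 2 in G and S ∩ H = ∅. -/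
section AuxStmt12
open SimpleGraph

section Helpers
variable {V : Type*} {Γ : SimpleGraph V}

private def chainWalk (f : ℕ → V) (hf : ∀ i, Γ.Adj (f i) (f (i+1))) :
    (m : ℕ) → Γ.Walk (f 0) (f m)
  | 0 => .nil
  | m+1 => (chainWalk f hf m).concat (hf m)

private lemma chainWalk_support (f : ℕ → V) (hf : ∀ i, Γ.Adj (f i) (f (i+1))) (m : ℕ) :
    (chainWalk f hf m).support = (List.range (m+1)).map f := by
  induction m with
  | zero => simp [chainWalk, List.range_succ]
  | succ m ih => simp [chainWalk, ih, List.range_succ]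

private lemma chainWalk_edges (f : ℕ → V) (hf : ∀ i, Γ.Adj (f i) (f (i+1))) (m : ℕ) :
    (chainWalk f hf m).edges = (List.range m).map (fun i => s(f i, f (i+1))) := by
  induction m with
  | zero => simp [chainWalk]
  | succ m ih => simp [chainWalk, ih, List.range_succ]

private lemma chainWalk_length (f : ℕ → V) (hf : ∀ i, Γ.Adj (f i) (f (i+1))) (m : ℕ) :
    (chainWalk f hf m).length = m := by
  induction m with
  | zero => simp [chainWalk]
  | succ m ih => simp [chainWalk, ih]

end Helpers

private lemma mod_window {n k k' : ℕ} (h1 : 1 ≤ k) (h2 : k ≤ n) (h1' : 1 ≤ k') (h2' : k' ≤ n)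
    (h : k % n = k' % n) : k = k' := by
  rcases eq_or_lt_of_le h2 with rfl | hk
  · rcases eq_or_lt_of_le h2' with rfl | hk'
    · rfl
    · rw [Nat.mod_self, Nat.mod_eq_of_lt hk'] at h; omega
  · rcases eq_or_lt_of_le h2' with rfl | hk'
    · rw [Nat.mod_self, Nat.mod_eq_of_lt hk] at h; omega
    · rwa [Nat.mod_eq_of_lt hk, Nat.mod_eq_of_lt hk'] at h

private lemma bwd {G : Type*} [AddCommGroup G] [Fintype G] [DecidableEq G]
    (h3 : 3 ≤ Fintype.card G) (s₁ s₂ : G)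
    (hidx : (AddSubgroup.zmultiples (s₂ - s₁)).index = 2)
    (hs1 : s₁ ∉ AddSubgroup.zmultiples (s₂ - s₁)) :
    (addCayley G {s₁, s₂}).IsHamiltonian := by
  intro _
  set d := s₂ - s₁ with hd
  set n := addOrderOf d with hn
  have hcard : Fintype.card G = 2 * n := by
    have h1 := AddSubgroup.index_mul_card (H := AddSubgroup.zmultiples d)
    rw [hidx, Nat.card_zmultiples, Nat.card_eq_fintype_card, ← hn] at h1
    omega
  have hn2 : 2 ≤ n := by omega
  have hkH : ∀ k : ℕ, k • d ∈ AddSubgroup.zmultiples d :=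
    fun k => AddSubgroup.nsmul_mem _ (AddSubgroup.mem_zmultiples d) k
  set x : ℕ → G := fun i => if i % 2 = 0 then (i / 2) • d else s₁ - (i / 2) • d with hx
  have hx_even : ∀ i, i % 2 = 0 → x i = (i / 2) • d := fun i h => by simp [hx, h]
  have hx_odd : ∀ i, i % 2 = 1 → x i = s₁ - (i / 2) • d := fun i h => by simp [hx, h]
  -- adjacency along the chain
  have hadj : ∀ i, (addCayley G {s₁, s₂}).Adj (x i) (x (i + 1)) := by
    intro i
    rcases Nat.mod_two_eq_zero_or_one i with h | h
    · rw [hx_even i h, hx_odd (i+1) (by omega), show (i+1)/2 = i/2 from by omega]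
      constructor
      · intro heq
        have hsum : (i/2 + i/2) • d = s₁ := by
          rw [add_nsmul]; exact eq_sub_iff_add_eq.mp heq
        exact hs1 (hsum ▸ hkH _)
      · have hsum : (i/2) • d + (s₁ - (i/2) • d) = s₁ := by abel
        rw [hsum]
        exact Set.mem_insert _ _
    · rw [hx_odd i h, hx_even (i+1) (by omega), show (i+1)/2 = i/2 + 1 from by omega]
      constructor
      · intro heq
        have hsum : (i/2 + 1 + i/2) • d = s₁ := by
          rw [add_nsmul]
          exact (sub_eq_iff_eq_add.mp heq).symm
        exact hs1 (hsum ▸ hkH _)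
      · have hsum : (s₁ - (i/2) • d) + (i/2 + 1) • d = s₂ := by
          rw [succ_nsmul, hd]; abel
        rw [hsum]
        exact Set.mem_insert_iff.mpr (Or.inr rfl)
  -- injectivity of x on [1, 2n]
  have hsmul_inj : ∀ k k' : ℕ, k • d = k' • d → k % n = k' % n := fun k k' h =>
    nsmul_eq_nsmul_iff_modEq.mp h
  have hinj : ∀ i j, 1 ≤ i → i ≤ 2*n → 1 ≤ j → j ≤ 2*n → x i = x j → i = j := by
    intro i j hi1 hi2 hj1 hj2 hxy
    rcases Nat.mod_two_eq_zero_or_one i with hpi | hpi <;>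
      rcases Nat.mod_two_eq_zero_or_one j with hpj | hpj
    · rw [hx_even i hpi, hx_even j hpj] at hxy
      have hm := mod_window (n := n) (by omega) (by omega) (by omega) (by omega)
        (hsmul_inj _ _ hxy)
      omega
    · exfalso
      rw [hx_even i hpi, hx_odd j hpj] at hxy
      have hsum : (i/2 + j/2) • d = s₁ := by
        rw [add_nsmul]; exact eq_sub_iff_add_eq.mp hxy
      exact hs1 (hsum ▸ hkH _)
    · exfalso
      rw [hx_odd i hpi, hx_even j hpj] at hxy
      have hsum : (j/2 + i/2) • d = s₁ := by
        rw [add_nsmul]; exact eq_sub_iff_add_eq.mp hxy.symm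
      exact hs1 (hsum ▸ hkH _)
    · rw [hx_odd i hpi, hx_odd j hpj] at hxy
      have h' := hsmul_inj _ _ (sub_right_inj.mp hxy)
      rw [Nat.mod_eq_of_lt (by omega), Nat.mod_eq_of_lt (by omega)] at h'
      omega
  have hx0 : x 0 = 0 := by rw [hx_even 0 rfl]; simp
  have hx2n : x (2*n) = 0 := by
    rw [hx_even (2*n) (by omega), show (2*n)/2 = n from by omega, hn]
    exact addOrderOf_nsmul_eq_zero d
  have hzero : ∀ i, 1 ≤ i → i ≤ 2*n → x i = 0 → i = 2*n := by
    intro i h1 h2 hxi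
    exact hinj i (2*n) h1 h2 (by omega) le_rfl (by rw [hxi, hx2n])
  -- edge injectivity
  have hedge : ∀ i j, i < 2*n → j < 2*n →
      s(x i, x (i+1)) = s(x j, x (j+1)) → i = j := by
    intro i j hi hj he
    rw [Sym2.eq_iff] at he
    rcases he with ⟨h1, h2⟩ | ⟨h1, h2⟩
    · have := hinj (i+1) (j+1) (by omega) (by omega) (by omega) (by omega) h2
      omega
    · by_cases hj0 : j = 0
      · subst hj0
        rw [hx0] at h2
        have hi2n := hzero (i+1) (by omega) (by omega) h2
        have := hinj i 1 (by omega) (by omega) (by omega) (by omega) h1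
        omega
      · have hij : i + 1 = j := hinj (i+1) j (by omega) (by omega) (by omega) (by omega) h2
        by_cases hi0 : i = 0
        · subst hi0
          rw [hx0] at h1
          have := hzero (j+1) (by omega) (by omega) h1.symm
          omega
        · have := hinj i (j+1) (by omega) (by omega) (by omega) (by omega) h1
          omega
  -- assemble the walk
  refine ⟨0, (chainWalk x hadj (2*n)).copy hx0 hx2n, ?_⟩
  rw [Walk.isHamiltonianCycle_iff_isCycle_and_support_count_tail_eq_one]
  have htail : ((chainWalk x hadj (2*n)).copy hx0 hx2n).support.tail
      = (List.range (2*n)).map (fun i => x (i+1)) := by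
    rw [Walk.support_copy, chainWalk_support, List.range_succ_eq_map]
    simp [List.map_map, Function.comp_def, Nat.succ_eq_add_one]
  have hnodup : ((List.range (2*n)).map (fun i => x (i+1))).Nodup := by
    refine List.Nodup.map_on ?_ List.nodup_range
    intro a ha b hb hab
    rw [List.mem_range] at ha hb
    have := hinj (a+1) (b+1) (by omega) (by omega) (by omega) (by omega) hab
    omega
  have hmemall : ∀ a : G, a ∈ (List.range (2*n)).map (fun i => x (i+1)) := by
    intro a
    have hfin : ((List.range (2*n)).map fun i => x (i+1)).toFinset = Finset.univ := by
      apply Finset.eq_univ_of_card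
      rw [List.toFinset_card_of_nodup hnodup]
      simp [hcard]
    rw [← List.mem_toFinset, hfin]
    exact Finset.mem_univ a
  refine ⟨⟨⟨⟨?_⟩, ?_⟩, ?_⟩, ?_⟩
  · -- edges nodup
    rw [Walk.edges_copy, chainWalk_edges]
    refine List.Nodup.map_on ?_ List.nodup_range
    intro a ha b hb hab
    rw [List.mem_range] at ha hb
    exact hedge a b ha hb hab
  · -- ne nil
    intro hnil
    have hClen : ((chainWalk x hadj (2*n)).copy hx0 hx2n).length = 2*n := by
      rw [Walk.length_copy, chainWalk_length]
    rw [hnil] at hClen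
    simp at hClen
    omega
  · -- support tail nodup
    rw [htail]; exact hnodup
  · intro a
    rw [htail]
    exact List.count_eq_one_of_mem hnodup (hmemall a)

section Helpers
variable {V : Type*} {Γ : SimpleGraph V}
private lemma path_ends_ne {a b : V} {p : Γ.Walk a b} (hp : p.IsPath) (hl : p.length ≠ 0) :
    a ≠ b := by
  rintro rfl
  rw [Walk.isPath_iff_eq_nil] at hp
  subst hp
  simp at hl

private lemma cycle_two_neighbors {v : V} {q : Γ.Walk v v} (hq : q.IsCycle) :
    ∃ a b, a ≠ b ∧ Γ.Adj v a ∧ Γ.Adj v b := by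
  have h3 := hq.three_le_length
  cases q with
  | nil => simp at h3
  | cons h r =>
    rw [Walk.cons_isCycle_iff] at hq
    have hr : r.IsPath := hq.1
    have hrl : 2 ≤ r.length := by
      simp only [Walk.length_cons] at h3; omega
    have hnn : ¬ r.reverse.Nil := by
      rw [Walk.nil_iff_length_eq, Walk.length_reverse]; omega
    refine ⟨_, r.reverse.getVert 1, ?_, h, r.reverse.adj_snd hnn⟩
    have ht : r.reverse.tail.IsPath := hr.reverse.tail
    have htl : r.reverse.tail.length ≠ 0 := by
      have := r.reverse.length_tail_add_one hnn
      rw [Walk.length_reverse] at this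
      omega
    exact (path_ends_ne ht htl).symm

private lemma ham_two_neighbors [Fintype V] [DecidableEq V]
    (h : Γ.IsHamiltonian) (h3 : 3 ≤ Fintype.card V) (v : V) :
    ∃ a b, a ≠ b ∧ Γ.Adj v a ∧ Γ.Adj v b := by
  obtain ⟨u, p, hp⟩ := h (by omega)
  have hv : v ∈ p.support := hp.mem_support v
  exact cycle_two_neighbors (hp.isCycle.rotate hv)
end Helpers

private lemma walk_coset {G : Type*} [AddCommGroup G] {s₁ s₂ : G} {x y : G}
    (w : (addCayley G {s₁, s₂}).Walk x y) :
    y - x ∈ AddSubgroup.zmultiples (s₂ - s₁) ∨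
      x + y - s₁ ∈ AddSubgroup.zmultiples (s₂ - s₁) := by
  set H := AddSubgroup.zmultiples (s₂ - s₁) with hH
  induction w with
  | nil => left; rw [sub_self]; exact zero_mem H
  | @cons x x' y h w ih =>
    have hstep : x + x' - s₁ ∈ H := by
      rcases h.2 with h2 | h2
      · rw [h2, sub_self]; exact zero_mem H
      · rw [Set.mem_singleton_iff] at h2
        rw [h2]
        exact AddSubgroup.mem_zmultiples (s₂ - s₁)
    rcases ih with ih | ih
    · right
      have : x + y - s₁ = (y - x') + (x + x' - s₁) := by abel
      rw [this]
      exact add_mem ih hstep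
    · left
      have : y - x = (x' + y - s₁) - (x + x' - s₁) := by abel
      rw [this]
      exact sub_mem ih hstep

section Fwd
variable {G : Type*} [AddCommGroup G] [Fintype G] [DecidableEq G]

private lemma part_one (h3 : 3 ≤ Fintype.card G) (s : G) :
    ¬ (addCayley G {s}).IsHamiltonian := by
  intro hham
  have hne : Nonempty G := Fintype.card_pos_iff.mp (by omega)
  obtain ⟨v⟩ := hne
  obtain ⟨a, b, hab, ha, hb⟩ := ham_two_neighbors hham h3 v
  have ha2 : v + a = s := ha.2
  have hb2 : v + b = s := hb.2
  exact hab (add_left_cancel (ha2.trans hb2.symm))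

private lemma fwd (h3 : 3 ≤ Fintype.card G) (s₁ s₂ : G) (_hne : s₁ ≠ s₂)
    (hham : (addCayley G {s₁, s₂}).IsHamiltonian) :
    (AddSubgroup.zmultiples (s₂ - s₁)).index = 2 ∧
      s₁ ∉ AddSubgroup.zmultiples (s₂ - s₁) ∧
      s₂ ∉ AddSubgroup.zmultiples (s₂ - s₁) := by
  set H := AddSubgroup.zmultiples (s₂ - s₁) with hH
  have factN : ∀ v : G, v + v ≠ s₁ ∧ v + v ≠ s₂ := by
    intro v
    obtain ⟨a, b, hab, ha, hb⟩ := ham_two_neighbors hham h3 v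
    obtain ⟨hav, ha2⟩ := ha
    obtain ⟨hbv, hb2⟩ := hb
    simp only [Set.mem_insert_iff, Set.mem_singleton_iff] at ha2 hb2
    constructor <;> intro hv
    · have ha' : v + a = s₂ := by
        rcases ha2 with h | h
        · exact absurd (add_left_cancel (hv.trans h.symm)) hav
        · exact h
      have hb' : v + b = s₂ := by
        rcases hb2 with h | h
        · exact absurd (add_left_cancel (hv.trans h.symm)) hbv
        · exact h
      exact hab (add_left_cancel (ha'.trans hb'.symm))
    · have ha' : v + a = s₁ := by
        rcases ha2 with h | h
        · exact h
        · exact absurd (add_left_cancel (hv.trans h.symm)) hav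
      have hb' : v + b = s₁ := by
        rcases hb2 with h | h
        · exact h
        · exact absurd (add_left_cancel (hv.trans h.symm)) hbv
      exact hab (add_left_cancel (ha'.trans hb'.symm))
  have factC : ∀ g : G, g ∈ H ∨ g - s₁ ∈ H := by
    intro g
    obtain ⟨w⟩ := hham.connected.preconnected 0 g
    have := walk_coset w
    simpa using this
  have hs1 : s₁ ∉ H := by
    intro hmem
    rw [hH, AddSubgroup.mem_zmultiples_iff] at hmem
    obtain ⟨m, hm⟩ := hmem
    rcases Int.even_or_odd m with ⟨j, hj⟩ | ⟨j, hj⟩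
    · refine (factN (j • (s₂ - s₁))).1 ?_
      rw [← add_zsmul, ← hj, hm]
    · refine (factN ((j + 1) • (s₂ - s₁))).2 ?_
      rw [← add_zsmul]
      have hj2 : j + 1 + (j + 1) = m + 1 := by omega
      rw [hj2, add_zsmul, one_zsmul, hm]
      abel
  have hs2 : s₂ ∉ H := by
    intro hmem
    refine hs1 ?_
    have := sub_mem hmem (AddSubgroup.mem_zmultiples (s₂ - s₁))
    simpa using this
  have h2s1 : s₁ + s₁ ∈ H := by
    rcases factC (s₁ + s₁) with h | h
    · exact h
    · exact absurd (by simpa using h) hs1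
  refine ⟨?_, hs1, hs2⟩
  rw [AddSubgroup.index_eq_two_iff]
  refine ⟨s₁, fun b => ?_⟩
  by_cases hb : b ∈ H
  · refine Or.inr ⟨hb, fun hA => hs1 ?_⟩
    have := sub_mem hA hb
    simpa using this
  · refine Or.inl ⟨?_, hb⟩
    rcases factC b with h | h
    · exact absurd h hb
    · have : b + s₁ = (b - s₁) + (s₁ + s₁) := by abel
      rw [this]
      exact add_mem h h2s1
end Fwd

end AuxStmt12

theorem stmt12 (G : Type*) [AddCommGroup G] [Fintype G] [DecidableEq G]
    (h3 : 3 ≤ Fintype.card G) :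
    (∀ s : G, ¬ (addCayley G {s}).IsHamiltonian) ∧
    (∀ s₁ s₂ : G, s₁ ≠ s₂ →
      ((addCayley G {s₁, s₂}).IsHamiltonian ↔
        (AddSubgroup.zmultiples (s₂ - s₁)).index = 2 ∧
          s₁ ∉ AddSubgroup.zmultiples (s₂ - s₁) ∧
          s₂ ∉ AddSubgroup.zmultiples (s₂ - s₁))) := by
  constructor
  · exact fun s => part_one h3 s
  · intro s₁ s₂ hne
    constructor
    · exact fwd h3 s₁ s₂ hne
    · rintro ⟨hidx, hs1, hs2⟩
      exact bwd h3 s₁ s₂ hidx hs1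
end
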